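/- arXiv:1910.00474 — 6 statements merged into one kernel-verified Lean document; each statement's English description precedes it below -/
import Mathlib

section
/- Let r and s be duplicate-free TP relations over the same fact type, and let op ∈ {∪ᵀᵖ, ∩ᵀᵖ, −ᵀᵖ} be a TP set operation. Then for every output tuple u ∈ r opᵀᵖ s there exists exactly one lineage-aware temporal window w ∈ W(r,s) such that w.F = u.F, w.T = u.T, and for every time point t ∈ u.T one has w.λr = λ^{r,u.F}_t and w.λs = λ^{s,u.F}_t. -/
/-- Boolean lineage formulas over a type `V` of tuple identifiers. -/
inductive LineageExpr (V : Type) : Type where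
  | var : V → LineageExpr V
  | not : LineageExpr V → LineageExpr V
  | and : LineageExpr V → LineageExpr V → LineageExpr V
  | or  : LineageExpr V → LineageExpr V → LineageExpr V

/-- A TP tuple: a fact, a lineage expression and a half-open time interval `[ts, te)`. -/
structure TPTuple (F V : Type) where
  fact : F
  lam : LineageExpr V
  ts : ℕ
  te : ℕ

/-- Time point `t` belongs to the interval of tuple `u`. -/
def TPTuple.memT {F V : Type} (t : ℕ) (u : TPTuple F V) : Prop :=
  u.ts ≤ t ∧ t < u.te

/-- All tuples of the relation have nonempty intervals (`Ts < Te`). -/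
def WF {F V : Type} (r : Set (TPTuple F V)) : Prop :=
  ∀ u ∈ r, u.ts < u.te

/-- A TP relation is duplicate-free iff any two distinct tuples have
different facts or disjoint time intervals. -/
def DupFree {F V : Type} (r : Set (TPTuple F V)) : Prop :=
  ∀ u ∈ r, ∀ u' ∈ r, u ≠ u' →
    u.fact ≠ u'.fact ∨ ∀ t : ℕ, ¬ (TPTuple.memT t u ∧ TPTuple.memT t u')

open Classical in
/-- `lamAt r f t` = the lineage `λ^{r,f}_t` of the (for duplicate-free `r`, unique)
tuple of `r` with fact `f` whose interval contains `t`; `none` if no such tuple exists. -/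
noncomputable def lamAt {F V : Type} (r : Set (TPTuple F V)) (f : F) (t : ℕ) :
    Option (LineageExpr V) :=
  if h : ∃ u, u ∈ r ∧ u.fact = f ∧ u.ts ≤ t ∧ t < u.te then some h.choose.lam else none
/-- A lineage-aware temporal window: a fact, a time interval and the pair of
(possibly null) lineages of the valid tuples of the two input relations. -/
structure Window (F V : Type) where
  fact : F
  ts : ℕ
  te : ℕ
  lamr : Option (LineageExpr V)
  lams : Option (LineageExpr V)

/-- Membership in the set of lineage-aware temporal windows `W(r,s)`. -/
def IsWindow {F V : Type} (r s : Set (TPTuple F V)) (w : Window F V) : Prop :=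
  w.ts < w.te ∧
  (∀ t : ℕ, w.ts ≤ t → t < w.te →
    (lamAt r w.fact t ≠ none ∨ lamAt s w.fact t ≠ none) ∧
    lamAt r w.fact t = w.lamr ∧ lamAt s w.fact t = w.lams) ∧
  (w.ts = 0 ∨
    ¬ (lamAt r w.fact (w.ts - 1) = w.lamr ∧ lamAt s w.fact (w.ts - 1) = w.lams)) ∧
  ¬ (lamAt r w.fact w.te = w.lamr ∧ lamAt s w.fact w.te = w.lams)
/-- The three TP set operations. -/
inductive TPOp : Type
  | inter
  | diff
  | union

/-- The filter condition `φ_op` on pairs of possibly-null lineages. -/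
def opFilter {V : Type} : TPOp → Option (LineageExpr V) → Option (LineageExpr V) → Prop
  | .inter, l1, l2 => l1 ≠ none ∧ l2 ≠ none
  | .diff,  l1, _  => l1 ≠ none
  | .union, l1, l2 => l1 ≠ none ∨ l2 ≠ none

/-- The lineage-concatenation function `g_op` (`none` when undefined):
`and`, `andNot` and `or` respectively. -/
def gOp {V : Type} :
    TPOp → Option (LineageExpr V) → Option (LineageExpr V) → Option (LineageExpr V)
  | .inter, some a, some b => some (.and a b)
  | .inter, _, _ => none
  | .diff, some a, none => some a
  | .diff, some a, some b => some (.and a (.not b))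
  | .diff, none, _ => none
  | .union, some a, none => some a
  | .union, none, some b => some b
  | .union, some a, some b => some (.or a b)
  | .union, none, none => none

/-- The result `r opᵀᵖ s` of a TP set operation: tuples `(f, λ, [ts,te))` such that
on all of `[ts,te)` the pair of input lineages is constant, satisfies `φ_op` and
yields `λ` via `g_op`, and the interval is maximal. -/
def opResult {F V : Type} (op : TPOp) (r s : Set (TPTuple F V)) : Set (TPTuple F V) :=
  {u | u.ts < u.te ∧
    ∃ l1 l2 : Option (LineageExpr V),
      opFilter op l1 l2 ∧
      gOp op l1 l2 = some u.lam ∧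
      (∀ t : ℕ, u.ts ≤ t → t < u.te → lamAt r u.fact t = l1 ∧ lamAt s u.fact t = l2) ∧
      (u.ts = 0 ∨
        ¬ (opFilter op (lamAt r u.fact (u.ts - 1)) (lamAt s u.fact (u.ts - 1)) ∧
           gOp op (lamAt r u.fact (u.ts - 1)) (lamAt s u.fact (u.ts - 1)) = some u.lam)) ∧
      ¬ (opFilter op (lamAt r u.fact u.te) (lamAt s u.fact u.te) ∧
         gOp op (lamAt r u.fact u.te) (lamAt s u.fact u.te) = some u.lam)}

/-
The output tuple `u` already carries the data of a window: the constant pair `(l₁, l₂)` of input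
lineages on `u.T`. The filter `φ_op` makes at least one of them non-null, and the maximality of
`u.T` for `(φ_op, g_op)` implies its maximality for the pair itself, since the pair `(l₁, l₂)`
satisfies `φ_op` and yields `u.λ`. Uniqueness holds because a window over `u.T` records the input
lineages at any time point of `u.T`.
-/

section
variable {F V : Type}

lemma ne_none_or_ne_none_of_opFilter {op : TPOp} {l₁ l₂ : Option (LineageExpr V)}
    (h : opFilter op l₁ l₂) : l₁ ≠ none ∨ l₂ ≠ none := by
  cases op with
  | inter => exact Or.inl h.1
  | diff => exact Or.inl h
  | union => exact h

lemma not_and_eq_of_not_opFilter_and_gOp {op : TPOp} {l₁ l₂ a b : Option (LineageExpr V)}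
    {lam : LineageExpr V} (hφ : opFilter op l₁ l₂) (hg : gOp op l₁ l₂ = some lam)
    (h : ¬ (opFilter op a b ∧ gOp op a b = some lam)) : ¬ (a = l₁ ∧ b = l₂) := by
  rintro ⟨rfl, rfl⟩
  exact h ⟨hφ, hg⟩

lemma exists_isWindow_of_mem_opResult {r s : Set (TPTuple F V)} {op : TPOp}
    {u : TPTuple F V} (hu : u ∈ opResult op r s) :
    ∃ l₁ l₂, IsWindow r s ⟨u.fact, u.ts, u.te, l₁, l₂⟩ ∧
      ∀ t, u.ts ≤ t → t < u.te → lamAt r u.fact t = l₁ ∧ lamAt s u.fact t = l₂ := by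
  obtain ⟨hlt, l₁, l₂, hφ, hg, hconst, hleft, hright⟩ := hu
  refine ⟨l₁, l₂, ⟨hlt, fun t h₁ h₂ => ?_, ?_, ?_⟩, hconst⟩
  · obtain ⟨e₁, e₂⟩ := hconst t h₁ h₂
    refine ⟨?_, e₁, e₂⟩
    rw [e₁, e₂]
    exact ne_none_or_ne_none_of_opFilter hφ
  · exact hleft.imp_right (not_and_eq_of_not_opFilter_and_gOp hφ hg)
  · exact not_and_eq_of_not_opFilter_and_gOp hφ hg hright

end

theorem tp_output_tuple_unique_window_general {F V : Type}
    (r s : Set (TPTuple F V))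
    (op : TPOp) (u : TPTuple F V) (hu : u ∈ opResult op r s) :
    ∃! w : Window F V, IsWindow r s w ∧
      w.fact = u.fact ∧ w.ts = u.ts ∧ w.te = u.te ∧
      ∀ t : ℕ, u.ts ≤ t → t < u.te →
        w.lamr = lamAt r u.fact t ∧ w.lams = lamAt s u.fact t := by
  obtain ⟨l₁, l₂, hw, hconst⟩ := exists_isWindow_of_mem_opResult hu
  refine ⟨_, ⟨hw, rfl, rfl, rfl, fun t h₁ h₂ => (hconst t h₁ h₂).imp Eq.symm Eq.symm⟩, ?_⟩
  rintro ⟨f, ts, te, lr, ls⟩ ⟨-, rfl, rfl, rfl, hlam⟩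
  obtain ⟨rfl, rfl⟩ := hconst u.ts le_rfl hw.1
  obtain ⟨rfl, rfl⟩ := hlam u.ts le_rfl hw.1
  rfl

/-- For duplicate-free TP relations `r` and `s` and any TP set
operation `op`, every output tuple `u ∈ r opᵀᵖ s` corresponds to exactly one
lineage-aware temporal window `w ∈ W(r,s)` with the same fact and interval whose
recorded lineages agree with `λ^{r,u.F}_t` and `λ^{s,u.F}_t` at every `t ∈ u.T`. -/
theorem tp_output_tuple_unique_window {F V : Type}
    (r s : Set (TPTuple F V)) (hrfin : r.Finite) (hsfin : s.Finite)
    (hrWF : WF r) (hsWF : WF s) (hrDF : DupFree r) (hsDF : DupFree s)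
    (op : TPOp) (u : TPTuple F V) (hu : u ∈ opResult op r s) :
    ∃! w : Window F V, IsWindow r s w ∧
      w.fact = u.fact ∧ w.ts = u.ts ∧ w.te = u.te ∧
      ∀ t : ℕ, u.ts ≤ t → t < u.te →
        w.lamr = lamAt r u.fact t ∧ w.lams = lamAt s u.fact t :=
  tp_output_tuple_unique_window_general r s op u hu
end

section
/- Let r and s be duplicate-free TP relations over the same fact type, let n_r = 2·|r| and n_s = 2·|s| be the total numbers of interval start and end points of the tuples of r and s respectively, and let f_d be the number of distinct facts occurring in tuples of r or s. Then the number of lineage-aware temporal windows satisfies |W(r,s)| ≤ n_r + n_s − f_d. -/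
/-!
Send each window to the pair (fact, start). A window is determined by that pair, since its
lineages are the ones valid at the start and its end is the first later point where they change.
Lineages change only at interval endpoints, so the start of a window is the start or end point of
a tuple with its fact. It is never the last end point of that fact, because the start lies inside
some tuple's interval. So the windows inject into the at most `n_r + n_s` endpoint pairs, less
the last end point of each fact.
-/

variable {F V : Type}

section LamAt

variable {r : Set (TPTuple F V)} {f : F} {t : ℕ}

lemma lamAt_eq_some (hDF : DupFree r) {u : TPTuple F V} (hu : u ∈ r) (hf : u.fact = f)
    (ht : u.memT t) : lamAt r f t = some u.lam := by
  have hex : ∃ v, v ∈ r ∧ v.fact = f ∧ v.ts ≤ t ∧ t < v.te := ⟨u, hu, hf, ht⟩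
  rw [lamAt, dif_pos hex]
  obtain ⟨hv, hvf, hvt⟩ := hex.choose_spec
  by_cases h : hex.choose = u
  · rw [h]
  · rcases hDF _ hv _ hu h with h' | h'
    · exact absurd (hvf.trans hf.symm) h'
    · exact absurd ⟨hvt, ht⟩ (h' t)

lemma exists_of_lamAt_eq_some {l : LineageExpr V} (h : lamAt r f t = some l) :
    ∃ u ∈ r, u.fact = f ∧ u.memT t ∧ u.lam = l := by
  rw [lamAt] at h
  split_ifs at h with hex
  obtain ⟨hv, hvf, hvt⟩ := hex.choose_spec
  exact ⟨hex.choose, hv, hvf, hvt, Option.some.inj h⟩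

lemma exists_of_lamAt_ne_none (h : lamAt r f t ≠ none) : ∃ u ∈ r, u.fact = f ∧ u.memT t := by
  obtain ⟨l, hl⟩ := Option.ne_none_iff_exists'.mp h
  obtain ⟨u, hu, huf, hut, -⟩ := exists_of_lamAt_eq_some hl
  exact ⟨u, hu, huf, hut⟩

lemma exists_endpoint_of_lamAt_ne_lamAt_succ (hDF : DupFree r)
    (h : lamAt r f t ≠ lamAt r f (t + 1)) :
    ∃ u ∈ r, u.fact = f ∧ (u.ts = t + 1 ∨ u.te = t + 1) := by
  rcases Option.eq_none_or_eq_some (lamAt r f (t + 1)) with hnone | ⟨l, hl⟩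
  · obtain ⟨u, hu, huf, hts, hte⟩ := exists_of_lamAt_ne_none (hnone ▸ h)
    refine ⟨u, hu, huf, Or.inr ?_⟩
    by_contra hne
    have := lamAt_eq_some hDF hu huf (t := t + 1) ⟨by omega, by omega⟩
    simp [hnone] at this
  · obtain ⟨u, hu, huf, ⟨hts, hte⟩, rfl⟩ := exists_of_lamAt_eq_some hl
    refine ⟨u, hu, huf, Or.inl ?_⟩
    by_contra hne
    exact h (hl ▸ lamAt_eq_some hDF hu huf ⟨by omega, by omega⟩)

end LamAt

namespace IsWindow

variable {r s : Set (TPTuple F V)} {w w' : Window F V}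

lemma exists_memT_ts (hw : IsWindow r s w) : ∃ u ∈ r ∪ s, u.fact = w.fact ∧ u.memT w.ts := by
  rcases (hw.2.1 w.ts le_rfl hw.1).1 with h | h
  · obtain ⟨u, hu, huf, hut⟩ := exists_of_lamAt_ne_none h
    exact ⟨u, Or.inl hu, huf, hut⟩
  · obtain ⟨u, hu, huf, hut⟩ := exists_of_lamAt_ne_none h
    exact ⟨u, Or.inr hu, huf, hut⟩

lemma exists_endpoint_eq_ts (hrDF : DupFree r) (hsDF : DupFree s) (hw : IsWindow r s w) :
    ∃ u ∈ r ∪ s, u.fact = w.fact ∧ (u.ts = w.ts ∨ u.te = w.ts) := by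
  rcases hts : w.ts with _ | t
  · obtain ⟨u, hu, huf, hut, -⟩ := hw.exists_memT_ts
    exact ⟨u, hu, huf, Or.inl (by omega)⟩
  have hprev := hw.2.2.1.resolve_left (by omega)
  obtain ⟨-, hr, hs⟩ := hw.2.1 w.ts le_rfl hw.1
  rw [hts, Nat.add_sub_cancel] at hprev
  rw [hts] at hr hs
  by_cases hrch : lamAt r w.fact t = lamAt r w.fact (t + 1)
  · have hsch : lamAt s w.fact t ≠ lamAt s w.fact (t + 1) := fun hsch =>
      hprev ⟨hrch.trans hr, hsch.trans hs⟩
    obtain ⟨u, hu, huf, hut⟩ := exists_endpoint_of_lamAt_ne_lamAt_succ hsDF hsch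
    exact ⟨u, Or.inr hu, huf, hut⟩
  · obtain ⟨u, hu, huf, hut⟩ := exists_endpoint_of_lamAt_ne_lamAt_succ hrDF hrch
    exact ⟨u, Or.inl hu, huf, hut⟩

lemma te_le (hw : IsWindow r s w) (hw' : IsWindow r s w') (hf : w.fact = w'.fact)
    (hts : w.ts = w'.ts) : w.te ≤ w'.te := by
  by_contra! hlt
  obtain ⟨-, hr, hs⟩ := hw.2.1 w'.te (by have := hw'.1; omega) hlt
  obtain ⟨-, hr₀, hs₀⟩ := hw.2.1 w.ts le_rfl hw.1
  obtain ⟨-, hr₀', hs₀'⟩ := hw'.2.1 w'.ts le_rfl hw'.1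
  rw [hf, hts] at hr₀ hs₀
  rw [hf] at hr hs
  exact hw'.2.2.2 ⟨hr.trans (hr₀.symm.trans hr₀'), hs.trans (hs₀.symm.trans hs₀')⟩

lemma eq_of_fact_eq_of_ts_eq (hw : IsWindow r s w) (hw' : IsWindow r s w')
    (hf : w.fact = w'.fact) (hts : w.ts = w'.ts) : w = w' := by
  have hte := le_antisymm (hw.te_le hw' hf hts) (hw'.te_le hw hf.symm hts.symm)
  obtain ⟨-, hr, hs⟩ := hw.2.1 w.ts le_rfl hw.1
  obtain ⟨-, hr', hs'⟩ := hw'.2.1 w'.ts le_rfl hw'.1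
  rw [hf, hts] at hr hs
  cases w
  cases w'
  simp_all

end IsWindow

namespace TPTuple

variable [DecidableEq F] (S : Finset (TPTuple F V))

def endpoints : Finset (F × ℕ) :=
  S.biUnion fun u => {(u.fact, u.ts), (u.fact, u.te)}

def lastEnd (f : F) : ℕ :=
  (S.filter (·.fact = f)).sup TPTuple.te

def lastEnds : Finset (F × ℕ) :=
  (S.image TPTuple.fact).image fun f => (f, lastEnd S f)

variable {S}

lemma card_endpoints_le : (endpoints S).card ≤ 2 * S.card :=
  calc (endpoints S).card
      ≤ ∑ u ∈ S, ({(u.fact, u.ts), (u.fact, u.te)} : Finset (F × ℕ)).card := Finset.card_biUnion_le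
    _ ≤ ∑ _u ∈ S, 2 := Finset.sum_le_sum fun _ _ => Finset.card_le_two
    _ = 2 * S.card := by rw [Finset.sum_const, smul_eq_mul, mul_comm]

lemma lastEnds_subset_endpoints : lastEnds S ⊆ endpoints S := by
  intro p hp
  obtain ⟨f, hf, rfl⟩ := Finset.mem_image.mp hp
  obtain ⟨u₀, hu₀, rfl⟩ := Finset.mem_image.mp hf
  obtain ⟨u, hu, hsup⟩ := Finset.exists_mem_eq_sup (S.filter (·.fact = u₀.fact))
    ⟨u₀, Finset.mem_filter.mpr ⟨hu₀, rfl⟩⟩ TPTuple.te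
  obtain ⟨huS, huf⟩ := Finset.mem_filter.mp hu
  refine Finset.mem_biUnion.mpr ⟨u, huS, ?_⟩
  rw [lastEnd, hsup, ← huf]
  simp

lemma card_lastEnds : (lastEnds S).card = (S.image TPTuple.fact).card :=
  Finset.card_image_of_injective _ fun _ _ h => congrArg Prod.fst h

lemma card_endpoints_sdiff_lastEnds_le :
    (endpoints S \ lastEnds S).card ≤ 2 * S.card - (S.image TPTuple.fact).card := by
  rw [Finset.card_sdiff_of_subset lastEnds_subset_endpoints, card_lastEnds]
  exact Nat.sub_le_sub_right card_endpoints_le _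

lemma not_mem_lastEnds {u : TPTuple F V} (hu : u ∈ S) {t : ℕ} (ht : t < u.te) :
    (u.fact, t) ∉ lastEnds S := by
  intro h
  obtain ⟨f, -, hft⟩ := Finset.mem_image.mp h
  obtain ⟨rfl, hlast⟩ := Prod.mk.inj hft
  have : u.te ≤ lastEnd S u.fact := Finset.le_sup (Finset.mem_filter.mpr ⟨hu, rfl⟩)
  omega

end TPTuple

open TPTuple in
lemma ncard_setOf_isWindow_le [DecidableEq F] {r s : Set (TPTuple F V)} (hrDF : DupFree r)
    (hsDF : DupFree s) {S : Finset (TPTuple F V)} (hS : (S : Set (TPTuple F V)) = r ∪ s) :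
    {w : Window F V | IsWindow r s w}.ncard ≤ (endpoints S \ lastEnds S).card := by
  have hinj : Set.InjOn (fun w : Window F V => (w.fact, w.ts)) {w | IsWindow r s w} :=
    fun w hw w' hw' h => hw.eq_of_fact_eq_of_ts_eq hw' (congrArg Prod.fst h) (congrArg Prod.snd h)
  rw [← hinj.ncard_image, ← Set.ncard_coe_finset]
  refine Set.ncard_le_ncard ?_ (Finset.finite_toSet _)
  rintro _ ⟨w, hw, rfl⟩
  rw [Finset.coe_sdiff, Set.mem_sdiff, Finset.mem_coe, Finset.mem_coe]
  dsimp only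
  constructor
  · obtain ⟨u, hu, huf, hut⟩ := hw.exists_endpoint_eq_ts hrDF hsDF
    refine Finset.mem_biUnion.mpr ⟨u, Finset.mem_coe.mp (hS ▸ hu), ?_⟩
    rcases hut with h | h <;> simp [← huf, h]
  · obtain ⟨u, hu, huf, -, hte⟩ := hw.exists_memT_ts
    rw [← huf]
    exact not_mem_lastEnds (Finset.mem_coe.mp (hS ▸ hu)) hte

theorem tp_window_count_bound_general {F V : Type}
    (r s : Set (TPTuple F V)) (hrfin : r.Finite) (hsfin : s.Finite)
    (hrDF : DupFree r) (hsDF : DupFree s) :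
    {w : Window F V | IsWindow r s w}.ncard ≤
      2 * r.ncard + 2 * s.ncard - (TPTuple.fact '' (r ∪ s)).ncard := by
  classical
  set S := (hrfin.union hsfin).toFinset
  have hS : (S : Set (TPTuple F V)) = r ∪ s := Set.Finite.coe_toFinset _
  have hcard : S.card ≤ r.ncard + s.ncard := by
    rw [← Set.ncard_coe_finset, hS]
    exact Set.ncard_union_le r s
  have hfacts : (TPTuple.fact '' (r ∪ s)).ncard = (S.image TPTuple.fact).card := by
    rw [← hS, ← Finset.coe_image, Set.ncard_coe_finset]
  calc {w : Window F V | IsWindow r s w}.ncard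
      ≤ (TPTuple.endpoints S \ TPTuple.lastEnds S).card := ncard_setOf_isWindow_le hrDF hsDF hS
    _ ≤ 2 * S.card - (S.image TPTuple.fact).card := TPTuple.card_endpoints_sdiff_lastEnds_le
    _ ≤ _ := by rw [hfacts]; omega

/-- For duplicate-free TP relations `r` and `s`, the number of
lineage-aware temporal windows is at most `n_r + n_s − f_d`, where
`n_r = 2·|r|` and `n_s = 2·|s|` are the total numbers of interval endpoints and
`f_d` is the number of distinct facts occurring in `r` or `s`. -/
theorem tp_window_count_bound {F V : Type}
    (r s : Set (TPTuple F V)) (hrfin : r.Finite) (hsfin : s.Finite)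
    (hrWF : WF r) (hsWF : WF s) (hrDF : DupFree r) (hsDF : DupFree s) :
    {w : Window F V | IsWindow r s w}.ncard ≤
      2 * r.ncard + 2 * s.ncard - (TPTuple.fact '' (r ∪ s)).ncard :=
  tp_window_count_bound_general r s hrfin hsfin hrDF hsDF
end

section
/- Let r and s be duplicate-free TP relations over the same fact type, let op ∈ {∪ᵀᵖ, ∩ᵀᵖ, −ᵀᵖ}, and let f be a fact such that exactly n₁ tuples of r and n₂ tuples of s have fact f, with n = n₁ + n₂ ≥ 1. Then the number of tuples of r opᵀᵖ s with fact f is at most 2n − 1. -/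
/-! Each output tuple with fact `f` starts where one of the two input lineages for `f` changes, hence
at an endpoint of an input tuple with fact `f`. Distinct output tuples with fact `f` start at distinct
points: the start determines the lineage pair, hence the lineage, and maximality then forces the end.
Every output start also lies strictly below the end of an input tuple covering it, so the latest input
end is never an output start, and the `n` starts and `n` ends leave at most `2n − 1` candidates. -/

namespace Set

variable {α : Type*} [Preorder α]

theorem ncard_le_ncard_sub_one_of_forall_exists_gt {S T : Set α} (hS : S.Finite) (hTS : T ⊆ S)
    (hT : ∀ x ∈ T, ∃ y ∈ S, x < y) : T.ncard ≤ S.ncard - 1 := by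
  rcases S.eq_empty_or_nonempty with rfl | hne
  · simp [subset_empty_iff.mp hTS]
  obtain ⟨m, hm⟩ := hS.exists_maximal hne
  have hTm : T ⊆ S \ {m} := by
    refine fun x hx => ⟨hTS hx, ?_⟩
    rintro rfl
    obtain ⟨y, hy, hxy⟩ := hT x hx
    exact hxy.not_ge (hm.2 hy hxy.le)
  calc T.ncard ≤ (S \ {m}).ncard := ncard_le_ncard hTm hS.sdiff
    _ = S.ncard - 1 := ncard_sdiff_singleton_of_mem hm.1

theorem ncard_le_two_mul_sub_one_of_subset_endpoints {ι : Type*} {I : Set ι} (hI : I.Finite)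
    (a b : ι → α) {P : Set α} (hP : P ⊆ a '' I ∪ b '' I) (hlt : ∀ p ∈ P, ∃ i ∈ I, p < b i) :
    P.ncard ≤ 2 * I.ncard - 1 := by
  set T := {x ∈ b '' I | ∃ y ∈ b '' I, x < y}
  have hT : T.ncard ≤ (b '' I).ncard - 1 :=
    ncard_le_ncard_sub_one_of_forall_exists_gt (hI.image b) (sep_subset _ _) fun x hx => hx.2
  have hPT : P ⊆ a '' I ∪ T := by
    intro p hp
    refine (hP hp).imp id fun hpb => ⟨hpb, ?_⟩
    obtain ⟨i, hi, hpi⟩ := hlt p hp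
    exact ⟨b i, mem_image_of_mem b hi, hpi⟩
  have hb : (b '' I).ncard ≤ I.ncard := ncard_image_le hI
  calc P.ncard ≤ (a '' I ∪ T).ncard := ncard_le_ncard hPT ((hI.image a).union ((hI.image b).sep _))
    _ ≤ (a '' I).ncard + T.ncard := ncard_union_le _ _
    _ ≤ I.ncard + ((b '' I).ncard - 1) := add_le_add (ncard_image_le hI) hT
    _ ≤ 2 * I.ncard - 1 := by omega

end Set

section TP

variable {F V : Type} {r s : Set (TPTuple F V)} {f : F} {t : ℕ}

theorem lamAt_eq_of_mem (hDF : DupFree r) {u : TPTuple F V} (hu : u ∈ r) (hf : u.fact = f)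
    (hts : u.ts ≤ t) (hte : t < u.te) : lamAt r f t = some u.lam := by
  have hex : ∃ w, w ∈ r ∧ w.fact = f ∧ w.ts ≤ t ∧ t < w.te := ⟨u, hu, hf, hts, hte⟩
  obtain ⟨hw, hwf, hw1, hw2⟩ := hex.choose_spec
  have hchoose : hex.choose = u := by
    by_contra hne
    rcases hDF _ hw _ hu hne with h | h
    · exact h (hwf.trans hf.symm)
    · exact h t ⟨⟨hw1, hw2⟩, hts, hte⟩
  rw [lamAt, dif_pos hex, hchoose]

theorem exists_mem_of_lamAt_ne_none (h : lamAt r f t ≠ none) :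
    ∃ u ∈ r, u.fact = f ∧ u.ts ≤ t ∧ t < u.te := by
  by_contra h'
  simp only [lamAt, dif_neg (by simpa only [and_assoc] using h')] at h
  exact h rfl

theorem exists_endpoint_of_lamAt_succ_ne (hDF : DupFree r)
    (hne : lamAt r f (t + 1) ≠ lamAt r f t) :
    ∃ v ∈ r, v.fact = f ∧ (v.ts = t + 1 ∨ v.te = t + 1) := by
  by_cases hcov : ∃ u ∈ r, u.fact = f ∧ u.ts ≤ t + 1 ∧ t + 1 < u.te
  · obtain ⟨v, hv, hvf, hts, hte⟩ := hcov
    refine ⟨v, hv, hvf, Or.inl ?_⟩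
    by_contra hts'
    exact hne ((lamAt_eq_of_mem hDF hv hvf hts hte).trans
      (lamAt_eq_of_mem hDF hv hvf (by omega) (by omega)).symm)
  · have hnone : lamAt r f (t + 1) = none := by
      by_contra h
      exact hcov (exists_mem_of_lamAt_ne_none h)
    obtain ⟨w, hw, hwf, hts, hte⟩ := exists_mem_of_lamAt_ne_none (hnone ▸ hne).symm
    refine ⟨w, hw, hwf, Or.inr ?_⟩
    by_contra hte'
    exact hcov ⟨w, hw, hwf, by omega, by omega⟩

theorem opFilter.ne_none_or_ne_none {op : TPOp} {l1 l2 : Option (LineageExpr V)}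
    (h : opFilter op l1 l2) : l1 ≠ none ∨ l2 ≠ none := by
  cases op with
  | inter => exact Or.inl h.1
  | diff => exact Or.inl h
  | union => exact h

/-- The condition that `opResult` requires on an output interval and excludes just outside it. -/
def OpHoldsAt (op : TPOp) (r s : Set (TPTuple F V)) (f : F) (l : LineageExpr V) (t : ℕ) : Prop :=
  opFilter op (lamAt r f t) (lamAt s f t) ∧ gOp op (lamAt r f t) (lamAt s f t) = some l

theorem OpHoldsAt.lam_eq {op : TPOp} {l l' : LineageExpr V} (h : OpHoldsAt op r s f l t)
    (h' : OpHoldsAt op r s f l' t) : l = l' :=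
  Option.some_injective _ (h.2.symm.trans h'.2)

namespace opResult

variable {op : TPOp} {u u' : TPTuple F V}

theorem opHoldsAt (hu : u ∈ opResult op r s) (hts : u.ts ≤ t) (hte : t < u.te) :
    OpHoldsAt op r s u.fact u.lam t := by
  obtain ⟨-, l1, l2, hfil, hg, hconst, -⟩ := hu
  obtain ⟨h1, h2⟩ := hconst t hts hte
  rw [OpHoldsAt, h1, h2]
  exact ⟨hfil, hg⟩

theorem exists_mem_cover (hu : u ∈ opResult op r s) :
    ∃ v ∈ r ∪ s, v.fact = u.fact ∧ v.ts ≤ u.ts ∧ u.ts < v.te := by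
  rcases (opHoldsAt hu le_rfl hu.1).1.ne_none_or_ne_none with h | h
  · obtain ⟨v, hv, hvf⟩ := exists_mem_of_lamAt_ne_none h
    exact ⟨v, Or.inl hv, hvf⟩
  · obtain ⟨v, hv, hvf⟩ := exists_mem_of_lamAt_ne_none h
    exact ⟨v, Or.inr hv, hvf⟩

theorem exists_endpoint_eq_ts (hrDF : DupFree r) (hsDF : DupFree s) (hu : u ∈ opResult op r s) :
    ∃ v ∈ r ∪ s, v.fact = u.fact ∧ (v.ts = u.ts ∨ v.te = u.ts) := by
  have hstart := opHoldsAt hu le_rfl hu.1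
  have hleft : u.ts = 0 ∨ ¬ OpHoldsAt op r s u.fact u.lam (u.ts - 1) := by
    obtain ⟨-, -, -, -, -, -, h, -⟩ := hu
    exact h
  rcases hts : u.ts with _ | t
  · obtain ⟨v, hv, hvf, hvts, -⟩ := exists_mem_cover hu
    exact ⟨v, hv, hvf, Or.inl (by omega)⟩
  have hprev : ¬ OpHoldsAt op r s u.fact u.lam t := by
    simpa only [hts, Nat.add_sub_cancel, Nat.add_one_ne_zero, false_or] using hleft
  rw [hts] at hstart
  by_cases hr : lamAt r u.fact (t + 1) = lamAt r u.fact t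
  · by_cases hs : lamAt s u.fact (t + 1) = lamAt s u.fact t
    · exact absurd (by rwa [OpHoldsAt, ← hr, ← hs]) hprev
    · obtain ⟨v, hv, hvf, hend⟩ := exists_endpoint_of_lamAt_succ_ne hsDF hs
      exact ⟨v, Or.inr hv, hvf, hend⟩
  · obtain ⟨v, hv, hvf, hend⟩ := exists_endpoint_of_lamAt_succ_ne hrDF hr
    exact ⟨v, Or.inl hv, hvf, hend⟩

theorem not_opHoldsAt_te (hu : u ∈ opResult op r s) : ¬ OpHoldsAt op r s u.fact u.lam u.te := by
  obtain ⟨-, -, -, -, -, -, -, h⟩ := hu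
  exact h

theorem lam_eq_of_ts_eq (hu : u ∈ opResult op r s) (hu' : u' ∈ opResult op r s)
    (hf : u.fact = u'.fact) (hts : u.ts = u'.ts) : u.lam = u'.lam := by
  have h' := opHoldsAt hu' le_rfl hu'.1
  rw [← hf, ← hts] at h'
  exact (opHoldsAt hu le_rfl hu.1).lam_eq h'

theorem te_le_of_ts_eq (hu : u ∈ opResult op r s) (hu' : u' ∈ opResult op r s)
    (hf : u.fact = u'.fact) (hts : u.ts = u'.ts) : u.te ≤ u'.te := by
  by_contra! hlt
  have h := opHoldsAt hu (t := u'.te) (by have := hu'.1; omega) hlt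
  rw [hf, lam_eq_of_ts_eq hu hu' hf hts] at h
  exact not_opHoldsAt_te hu' h

theorem injOn_ts : Set.InjOn TPTuple.ts {u ∈ opResult op r s | u.fact = f} := by
  rintro u ⟨hu, hf⟩ u' ⟨hu', hf'⟩ hts
  have hfact : u.fact = u'.fact := hf.trans hf'.symm
  have hlam := lam_eq_of_ts_eq hu hu' hfact hts
  have hte := (te_le_of_ts_eq hu hu' hfact hts).antisymm (te_le_of_ts_eq hu' hu hfact.symm hts.symm)
  cases u
  cases u'
  simp only [TPTuple.mk.injEq]
  exact ⟨hfact, hlam, hts, hte⟩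

end opResult

end TP

theorem tp_output_per_fact_bound_general {F V : Type}
    (r s : Set (TPTuple F V)) (hrfin : r.Finite) (hsfin : s.Finite)
    (hrDF : DupFree r) (hsDF : DupFree s)
    (op : TPOp) (f : F) (n1 n2 : ℕ)
    (h1 : {u ∈ r | u.fact = f}.ncard = n1)
    (h2 : {u ∈ s | u.fact = f}.ncard = n2) :
    {u ∈ opResult op r s | u.fact = f}.ncard ≤ 2 * (n1 + n2) - 1 := by
  have hI : {u ∈ r ∪ s | u.fact = f}.ncard ≤ n1 + n2 := by
    rw [← h1, ← h2]
    exact (congrArg Set.ncard Set.sep_union).trans_le (Set.ncard_union_le _ _)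
  have hstarts : (TPTuple.ts '' {u ∈ opResult op r s | u.fact = f}).ncard
      ≤ 2 * {u ∈ r ∪ s | u.fact = f}.ncard - 1 := by
    refine Set.ncard_le_two_mul_sub_one_of_subset_endpoints ((hrfin.union hsfin).sep _)
      TPTuple.ts TPTuple.te ?_ ?_
    · rintro _ ⟨u, ⟨hu, rfl⟩, rfl⟩
      obtain ⟨v, hv, hvf, hend⟩ := opResult.exists_endpoint_eq_ts hrDF hsDF hu
      exact hend.imp (⟨v, ⟨hv, hvf⟩, ·⟩) (⟨v, ⟨hv, hvf⟩, ·⟩)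
    · rintro _ ⟨u, ⟨hu, rfl⟩, rfl⟩
      obtain ⟨v, hv, hvf, -, hlt⟩ := opResult.exists_mem_cover hu
      exact ⟨v, ⟨hv, hvf⟩, hlt⟩
  rw [opResult.injOn_ts.ncard_image] at hstarts
  omega

/-- For duplicate-free TP relations `r` and `s`, any TP set
operation `op`, and a fact `f` such that exactly `n₁` tuples of `r` and `n₂`
tuples of `s` have fact `f` with `n = n₁ + n₂ ≥ 1`, the number of tuples of
`r opᵀᵖ s` with fact `f` is at most `2n − 1`. -/
theorem tp_output_per_fact_bound {F V : Type}
    (r s : Set (TPTuple F V)) (hrfin : r.Finite) (hsfin : s.Finite)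
    (hrWF : WF r) (hsWF : WF s) (hrDF : DupFree r) (hsDF : DupFree s)
    (op : TPOp) (f : F) (n1 n2 : ℕ)
    (h1 : {u ∈ r | u.fact = f}.ncard = n1)
    (h2 : {u ∈ s | u.fact = f}.ncard = n2)
    (hn : 1 ≤ n1 + n2) :
    {u ∈ opResult op r s | u.fact = f}.ncard ≤ 2 * (n1 + n2) - 1 :=
  tp_output_per_fact_bound_general r s hrfin hsfin hrDF hsDF op f n1 n2 h1 h2
end

section
/- The result of any TP set query over duplicate-free TP relations is duplicate-free: if Q is an expression built from duplicate-free TP relations by the operators ∪ᵀᵖ, ∩ᵀᵖ, −ᵀᵖ, then any two distinct tuples of the result of Q either have different facts or disjoint time intervals. -/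
/-- TP set queries over base relations indexed by `ι`. -/
inductive TPQuery (ι : Type) : Type where
  | base : ι → TPQuery ι
  | inter : TPQuery ι → TPQuery ι → TPQuery ι
  | diff : TPQuery ι → TPQuery ι → TPQuery ι
  | union : TPQuery ι → TPQuery ι → TPQuery ι

/-- The list of (indices of) base relations occurring in a query. -/
def TPQuery.idxList {ι : Type} : TPQuery ι → List ι
  | .base i => [i]
  | .inter q1 q2 => q1.idxList ++ q2.idxList
  | .diff q1 q2 => q1.idxList ++ q2.idxList
  | .union q1 q2 => q1.idxList ++ q2.idxList

/-- A query is non-repeating iff each base relation occurs at most once in it. -/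
def TPQuery.NonRepeating {ι : Type} (q : TPQuery ι) : Prop := q.idxList.Nodup

/-- Evaluation of a TP set query, given an assignment `R` of base relations. -/
def TPQuery.eval {ι F V : Type} (R : ι → Set (TPTuple F V)) :
    TPQuery ι → Set (TPTuple F V)
  | .base i => R i
  | .inter q1 q2 => opResult TPOp.inter (q1.eval R) (q2.eval R)
  | .diff q1 q2 => opResult TPOp.diff (q1.eval R) (q2.eval R)
  | .union q1 q2 => opResult TPOp.union (q1.eval R) (q2.eval R)

/-!
Each TP set operation is a pointwise condition on time points, and its result consists of the
maximal runs of that condition. Since `λ^{r,f}_t` is a function of `t`, two result tuples with the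
same fact that share a time point carry the same lineage, hence are maximal runs of the same
condition through a common point, hence have the same interval. So every operation produces a
duplicate-free relation, and the theorem follows by induction on the query.
-/

def IsMaximalRun (P : ℕ → Prop) (a b : ℕ) : Prop :=
  (∀ t, a ≤ t → t < b → P t) ∧ (a = 0 ∨ ¬ P (a - 1)) ∧ ¬ P b

theorem IsMaximalRun.left_le {P : ℕ → Prop} {a b a' b' t : ℕ} (h : IsMaximalRun P a b)
    (h' : IsMaximalRun P a' b') (ht : a ≤ t ∧ t < b) (ht' : a' ≤ t ∧ t < b') : a ≤ a' := by
  by_contra! hlt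
  rcases h.2.1 with h0 | hP
  · omega
  · exact hP (h'.1 (a - 1) (by omega) (by omega))

theorem IsMaximalRun.right_le {P : ℕ → Prop} {a b a' b' t : ℕ} (h : IsMaximalRun P a b)
    (h' : IsMaximalRun P a' b') (ht : a ≤ t ∧ t < b) (ht' : a' ≤ t ∧ t < b') : b ≤ b' := by
  by_contra! hlt
  exact h'.2.2 (h.1 b' (by omega) hlt)

theorem IsMaximalRun.eq_of_common_point {P : ℕ → Prop} {a b a' b' t : ℕ}
    (h : IsMaximalRun P a b) (h' : IsMaximalRun P a' b') (ht : a ≤ t ∧ t < b)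
    (ht' : a' ≤ t ∧ t < b') : a = a' ∧ b = b' :=
  ⟨le_antisymm (h.left_le h' ht ht') (h'.left_le h ht' ht),
    le_antisymm (h.right_le h' ht ht') (h'.right_le h ht' ht)⟩

section OpResult

variable {F V : Type}

def opProducesAt (op : TPOp) (r s : Set (TPTuple F V)) (f : F) (l : LineageExpr V) (t : ℕ) :
    Prop :=
  opFilter op (lamAt r f t) (lamAt s f t) ∧ gOp op (lamAt r f t) (lamAt s f t) = some l

theorem isMaximalRun_of_mem_opResult {op : TPOp} {r s : Set (TPTuple F V)} {u : TPTuple F V}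
    (hu : u ∈ opResult op r s) : IsMaximalRun (opProducesAt op r s u.fact u.lam) u.ts u.te := by
  obtain ⟨-, l1, l2, hφ, hg, hconst, hleft, hright⟩ := hu
  refine ⟨fun t hts hte => ?_, hleft, hright⟩
  obtain ⟨h1, h2⟩ := hconst t hts hte
  exact ⟨h1 ▸ h2 ▸ hφ, h1 ▸ h2 ▸ hg⟩

theorem lam_eq_of_opProducesAt {op : TPOp} {r s : Set (TPTuple F V)} {f : F}
    {l l' : LineageExpr V} {t : ℕ} (h : opProducesAt op r s f l t)
    (h' : opProducesAt op r s f l' t) : l = l' :=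
  Option.some_injective _ (h.2.symm.trans h'.2)

theorem opResult_dupFree (op : TPOp) (r s : Set (TPTuple F V)) :
    DupFree (opResult op r s) := by
  intro u hu u' hu' hne
  obtain hf | hf := ne_or_eq u.fact u'.fact
  · exact .inl hf
  refine .inr fun t ⟨ht, ht'⟩ => ?_
  have hrun := isMaximalRun_of_mem_opResult hu
  have hrun' := isMaximalRun_of_mem_opResult hu'
  rw [hf] at hrun
  have hlam : u.lam = u'.lam :=
    lam_eq_of_opProducesAt (hrun.1 t ht.1 ht.2) (hrun'.1 t ht'.1 ht'.2)
  rw [hlam] at hrun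
  obtain ⟨hts, hte⟩ := hrun.eq_of_common_point hrun' ht ht'
  exact hne (by cases u; cases u'; simp_all)

end OpResult

theorem tp_query_eval_dupFree_general {ι F V : Type}
    (R : ι → Set (TPTuple F V))
    (hDF : ∀ i, DupFree (R i))
    (q : TPQuery ι) :
    DupFree (q.eval R) := by
  induction q with
  | base i => exact hDF i
  | inter => exact opResult_dupFree _ _ _
  | diff => exact opResult_dupFree _ _ _
  | union => exact opResult_dupFree _ _ _

/-- The result of any TP set query over duplicate-free TP
relations is duplicate-free: any two distinct tuples of the result have
different facts or disjoint time intervals. -/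
theorem tp_query_eval_dupFree {ι F V : Type}
    (R : ι → Set (TPTuple F V))
    (hfin : ∀ i, (R i).Finite) (hWF : ∀ i, WF (R i)) (hDF : ∀ i, DupFree (R i))
    (q : TPQuery ι) :
    DupFree (q.eval R) :=
  tp_query_eval_dupFree_general R hDF q
end

section
/- Let V be a finite type and let μ be the product probability measure on assignments V → Bool with independent coordinates, coordinate v being true with probability p_v ∈ [0,1]. For every Boolean formula φ over V in one-occurrence form (each variable occurs at most once in φ), the probability μ({a | φ evaluates to true under a}) equals the value Pe(φ) computed by recursion on φ: Pe(v) = p_v, Pe(¬ψ) = 1 − Pe(ψ), Pe(ψ₁ ∧ ψ₂) = Pe(ψ₁)·Pe(ψ₂), and Pe(ψ₁ ∨ ψ₂) = Pe(ψ₁) + Pe(ψ₂) − Pe(ψ₁)·Pe(ψ₂). -/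
/-- Evaluation of a Boolean lineage formula under an assignment of truth values. -/
def LineageExpr.eval {V : Type} (a : V → Bool) : LineageExpr V → Bool
  | .var v => a v
  | .not φ => !(φ.eval a)
  | .and φ ψ => φ.eval a && ψ.eval a
  | .or φ ψ => φ.eval a || ψ.eval a

/-- The set of variables occurring in a Boolean formula. -/
def LineageExpr.vars {V : Type} : LineageExpr V → Set V
  | .var v => {v}
  | .not φ => φ.vars
  | .and φ ψ => φ.vars ∪ ψ.vars
  | .or φ ψ => φ.vars ∪ ψ.vars

open MeasureTheory in
/-- The product Bernoulli measure on assignments `V → Bool`: coordinates are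
independent and coordinate `v` is `true` with probability `p v`. -/
noncomputable def prodBernoulli {V : Type} [Fintype V] (p : V → ENNReal)
    (hp : ∀ v, p v ≤ 1) : Measure (V → Bool) :=
  Measure.pi fun v => (PMF.bernoulli (p v).toNNReal
    (by simpa using ENNReal.toNNReal_mono ENNReal.one_ne_top (hp v))).toMeasure
/-- Number of occurrences of the tuple identifier `v` in a lineage formula. -/
def LineageExpr.varCount {V : Type} [DecidableEq V] (v : V) : LineageExpr V → ℕ
  | .var w => if w = v then 1 else 0
  | .not φ => φ.varCount v
  | .and φ ψ => φ.varCount v + ψ.varCount v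
  | .or φ ψ => φ.varCount v + ψ.varCount v

/-- A lineage formula is in one-occurrence form (1OF) iff every tuple identifier
occurs at most once in it. -/
def OneOccurrenceForm {V : Type} [DecidableEq V] (φ : LineageExpr V) : Prop :=
  ∀ v : V, φ.varCount v ≤ 1
/-- The recursive probability valuation of a Boolean formula:
`Pe(v) = p v`, `Pe(¬ψ) = 1 − Pe ψ`, `Pe(ψ₁ ∧ ψ₂) = Pe ψ₁ · Pe ψ₂`,
`Pe(ψ₁ ∨ ψ₂) = Pe ψ₁ + Pe ψ₂ − Pe ψ₁ · Pe ψ₂`. -/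
noncomputable def Pe {V : Type} (p : V → ℝ) : LineageExpr V → ℝ
  | .var v => p v
  | .not φ => 1 - Pe p φ
  | .and φ ψ => Pe p φ * Pe p ψ
  | .or φ ψ => Pe p φ + Pe p ψ - Pe p φ * Pe p ψ

/-!
In a one-occurrence formula the two operands of every `∧` and `∨` mention disjoint sets of
variables, so under a product measure the events they define are independent. Hence
`P(ψ₁ ∧ ψ₂) = P ψ₁ · P ψ₂`, inclusion–exclusion gives the `∨` rule, and complementation the `¬`
rule; induction on the formula then identifies the probability with `Pe`.
-/

open MeasureTheory ProbabilityTheory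

theorem DependsOn.preimage_restrict_image {ι : Type*} {α : ι → Type*} {s : Finset ι}
    {A : Set (∀ i, α i)} (hA : DependsOn (· ∈ A) s) : s.restrict ⁻¹' (s.restrict '' A) = A := by
  refine Set.Subset.antisymm ?_ (Set.subset_preimage_image _ _)
  rintro x ⟨y, hy, hxy⟩
  have : (y ∈ A) = (x ∈ A) := hA fun i hi => congrFun hxy ⟨i, hi⟩
  exact this ▸ hy

theorem MeasureTheory.Measure.pi_inter_eq_mul_of_dependsOn {ι : Type*} [Fintype ι]
    {Ω : ι → Type*} [∀ i, MeasurableSpace (Ω i)] [∀ i, Countable (Ω i)]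
    [∀ i, MeasurableSingletonClass (Ω i)] {μ : ∀ i, Measure (Ω i)}
    [∀ i, IsProbabilityMeasure (μ i)] {s t : Set ι} (hst : Disjoint s t)
    {A B : Set (∀ i, Ω i)} (hA : DependsOn (· ∈ A) s) (hB : DependsOn (· ∈ B) t) :
    Measure.pi μ (A ∩ B) = Measure.pi μ A * Measure.pi μ B := by
  classical
  have hindep : IndepFun s.toFinset.restrict t.toFinset.restrict (Measure.pi μ) :=
    (iIndepFun_pi (X := fun _ => id) fun _ => aemeasurable_id).indepFun_finset _ _
      (Set.disjoint_toFinset.mpr hst) fun i => measurable_pi_apply i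
  rw [← DependsOn.preimage_restrict_image (s := s.toFinset) (hA.mono (by simp)),
    ← DependsOn.preimage_restrict_image (s := t.toFinset) (hB.mono (by simp))]
  exact hindep.measure_inter_preimage_eq_mul _ _ (Set.to_countable _).measurableSet
    (Set.to_countable _).measurableSet

namespace LineageExpr

variable {V : Type}

theorem dependsOn_eval (φ : LineageExpr V) : DependsOn (fun a => φ.eval a) φ.vars := by
  intro a b h
  induction φ with
  | var v => exact h v rfl
  | not φ ih => simp only [eval, ih h]
  | and φ ψ ihφ ihψ | or φ ψ ihφ ihψ =>
    simp only [eval, ihφ fun v hv => h v (Or.inl hv), ihψ fun v hv => h v (Or.inr hv)]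

theorem varCount_pos_of_mem_vars [DecidableEq V] {φ : LineageExpr V} {v : V} (h : v ∈ φ.vars) :
    0 < φ.varCount v := by
  induction φ with
  | var w =>
    obtain rfl : v = w := h
    simp [varCount]
  | not φ ih => exact ih h
  | and φ ψ ihφ ihψ | or φ ψ ihφ ihψ =>
    rcases h with h | h
    · exact Nat.add_pos_left (ihφ h) _
    · exact Nat.add_pos_right _ (ihψ h)

end LineageExpr

/-- The hypothesis is `OneOccurrenceForm (φ.and ψ)`, or `OneOccurrenceForm (φ.or ψ)`, unfolded. -/
theorem OneOccurrenceForm.of_varCount_add_le_one {V : Type} [DecidableEq V]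
    {φ ψ : LineageExpr V} (h : ∀ v, φ.varCount v + ψ.varCount v ≤ 1) :
    OneOccurrenceForm φ ∧ OneOccurrenceForm ψ ∧ Disjoint φ.vars ψ.vars := by
  refine ⟨fun v => (Nat.le_add_right _ _).trans (h v), fun v => (Nat.le_add_left _ _).trans (h v),
    Set.disjoint_left.mpr fun v hφ hψ => ?_⟩
  have := h v
  have := LineageExpr.varCount_pos_of_mem_vars hφ
  have := LineageExpr.varCount_pos_of_mem_vars hψ
  omega

section ProductMeasure

variable {V : Type} [Fintype V] {ν : V → Measure Bool} [∀ v, IsProbabilityMeasure (ν v)]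

theorem measureReal_pi_eval_inter {φ ψ : LineageExpr V} (h : Disjoint φ.vars ψ.vars) :
    (Measure.pi ν).real ({a | φ.eval a} ∩ {a | ψ.eval a}) =
      (Measure.pi ν).real {a | φ.eval a} * (Measure.pi ν).real {a | ψ.eval a} := by
  have hA : DependsOn (· ∈ {a | φ.eval a}) φ.vars := fun _ _ hab =>
    congrArg (· = true) (φ.dependsOn_eval hab)
  have hB : DependsOn (· ∈ {a | ψ.eval a}) ψ.vars := fun _ _ hab =>
    congrArg (· = true) (ψ.dependsOn_eval hab)
  rw [measureReal_def, Measure.pi_inter_eq_mul_of_dependsOn h hA hB, ENNReal.toReal_mul]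
  rfl

theorem measureReal_pi_eval_eq_Pe [DecidableEq V] (p : V → ℝ)
    (hp : ∀ v, (ν v).real {true} = p v) {φ : LineageExpr V} (hφ : OneOccurrenceForm φ) :
    (Measure.pi ν).real {a | φ.eval a} = Pe p φ := by
  induction φ with
  | var v =>
    rw [Pe, ← hp v, ← (measurePreserving_eval ν v).measureReal_preimage
      (measurableSet_singleton true).nullMeasurableSet]
    rfl
  | not φ ih =>
    have hset : {a | (φ.not).eval a} = {a | φ.eval a}ᶜ := by ext; simp [LineageExpr.eval]
    rw [hset, measureReal_compl (Set.to_countable _).measurableSet, probReal_univ, ih hφ, Pe]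
  | and φ ψ ihφ ihψ =>
    obtain ⟨hφ', hψ', hdisj⟩ := OneOccurrenceForm.of_varCount_add_le_one hφ
    have hset : {a | (φ.and ψ).eval a} = {a | φ.eval a} ∩ {a | ψ.eval a} := by
      ext; simp [LineageExpr.eval]
    rw [hset, measureReal_pi_eval_inter hdisj, ihφ hφ', ihψ hψ', Pe]
  | or φ ψ ihφ ihψ =>
    obtain ⟨hφ', hψ', hdisj⟩ := OneOccurrenceForm.of_varCount_add_le_one hφ
    have hset : {a | (φ.or ψ).eval a} = {a | φ.eval a} ∪ {a | ψ.eval a} := by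
      ext; simp [LineageExpr.eval]
    have hincl := measureReal_union_add_inter (μ := Measure.pi ν) (s := {a | φ.eval a})
      (Set.to_countable {a | ψ.eval a}).measurableSet
    rw [measureReal_pi_eval_inter hdisj, ihφ hφ', ihψ hψ'] at hincl
    rw [hset, Pe]
    linarith

end ProductMeasure

theorem PMF.toMeasure_bernoulli_real_true (p : NNReal) (h : p ≤ 1) :
    (PMF.bernoulli p h).toMeasure.real {true} = p := by
  simp only [measureReal_def, PMF.toMeasure_apply_singleton _ _ (measurableSet_singleton true)]
  rfl

open MeasureTheory in
/-- Under the product Bernoulli measure on `V → Bool` with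
coordinate `v` true with probability `p v ∈ [0,1]`, the probability that a
Boolean formula in one-occurrence form evaluates to true equals its recursive
valuation `Pe`. -/
theorem lineage_1OF_probability_eq_Pe {V : Type} [Fintype V] [DecidableEq V]
    (p : V → ℝ) (hp0 : ∀ v, 0 ≤ p v) (hp1 : ∀ v, p v ≤ 1)
    (φ : LineageExpr V) (h1of : OneOccurrenceForm φ) :
    (prodBernoulli (fun v => ENNReal.ofReal (p v))
        (fun v => ENNReal.ofReal_le_one.mpr (hp1 v))
        {a | φ.eval a = true}).toReal = Pe p φ :=
  measureReal_pi_eval_eq_Pe p (fun v => by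
    refine (PMF.toMeasure_bernoulli_real_true _ _).trans ?_
    rw [ENNReal.coe_toNNReal_eq_toReal, ENNReal.toReal_ofReal (hp0 v)]) h1of
end

section
/- Let Q be a non-repeating TP set query over duplicate-free TP relations with atomic, pairwise distinct base lineages, where the full set of base tuple identifiers is a finite type V, and let μ be the product Bernoulli measure on assignments V → Bool in which identifier v is true with probability p_v ∈ [0,1] independently. Then for every result tuple u of Q, the marginal probability μ({a | u.λ evaluates to true under a}) equals the value Pe(u.λ) computed by recursion: Pe(v) = p_v, Pe(¬ψ) = 1 − Pe(ψ), Pe(ψ₁ ∧ ψ₂) = Pe(ψ₁)·Pe(ψ₂), Pe(ψ₁ ∨ ψ₂) = Pe(ψ₁) + Pe(ψ₂) − Pe(ψ₁)·Pe(ψ₂). -/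
/-- The base relations have atomic, pairwise distinct lineages: every tuple's lineage
is a single tuple identifier, and lineages of distinct base tuples (within one base
relation or across distinct base relations) are distinct. -/
def AtomicDistinctLineages {ι F V : Type} (R : ι → Set (TPTuple F V)) : Prop :=
  (∀ i, ∀ u ∈ R i, ∃ v : V, u.lam = LineageExpr.var v) ∧
  (∀ i j, ∀ u ∈ R i, ∀ u' ∈ R j, (i ≠ j ∨ u ≠ u') → u.lam ≠ u'.lam)
/-!
Every lineage produced by a non-repeating query is read-once: each operation combines one
lineage of each operand, and by non-repetition and distinctness of base identifiers these
involve disjoint sets of identifiers. Under a product measure, events determined by disjoint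
sets of coordinates are independent, so on a read-once formula probability turns `∧` into a
product, `∨` into inclusion–exclusion and `¬` into the complement, which is the recursion `Pe`.
-/

open MeasureTheory ProbabilityTheory

namespace LineageExpr

variable {V : Type}

inductive ReadOnce : LineageExpr V → Prop
  | var (v : V) : ReadOnce (.var v)
  | not {φ : LineageExpr V} : ReadOnce φ → ReadOnce (.not φ)
  | and {φ ψ : LineageExpr V} : ReadOnce φ → ReadOnce ψ → Disjoint φ.vars ψ.vars →
      ReadOnce (.and φ ψ)
  | or {φ ψ : LineageExpr V} : ReadOnce φ → ReadOnce ψ → Disjoint φ.vars ψ.vars →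
      ReadOnce (.or φ ψ)

theorem setOf_eval_not (φ : LineageExpr V) :
    {a | (not φ).eval a = true} = {a | φ.eval a = true}ᶜ := by
  ext; simp [eval]

theorem setOf_eval_and (φ ψ : LineageExpr V) :
    {a | (and φ ψ).eval a = true} = {a | φ.eval a = true} ∩ {a | ψ.eval a = true} := by
  ext; simp [eval]

theorem setOf_eval_or (φ ψ : LineageExpr V) :
    {a | (or φ ψ).eval a = true} = {a | φ.eval a = true} ∪ {a | ψ.eval a = true} := by
  ext; simp [eval]

theorem measurableSet_setOf_eval_of_vars_subset (φ : LineageExpr V) {S : Set V}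
    (hS : φ.vars ⊆ S) :
    MeasurableSet[⨆ v ∈ S, MeasurableSpace.comap (fun a : V → Bool ↦ a v) inferInstance]
      {a | φ.eval a = true} := by
  induction φ with
  | var v =>
    exact le_iSup₂ (f := fun v _ ↦ MeasurableSpace.comap (fun a : V → Bool ↦ a v) _)
      v (hS rfl) _ ⟨{true}, trivial, rfl⟩
  | not φ ih => exact setOf_eval_not φ ▸ (ih hS).compl
  | and φ ψ ih₁ ih₂ =>
    exact setOf_eval_and φ ψ ▸ (ih₁ (Set.union_subset_iff.1 hS).1).inter
      (ih₂ (Set.union_subset_iff.1 hS).2)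
  | or φ ψ ih₁ ih₂ =>
    exact setOf_eval_or φ ψ ▸ (ih₁ (Set.union_subset_iff.1 hS).1).union
      (ih₂ (Set.union_subset_iff.1 hS).2)

theorem measurableSet_setOf_eval (φ : LineageExpr V) : MeasurableSet {a | φ.eval a = true} :=
  iSup₂_le (fun v _ ↦ (measurable_pi_apply v).comap_le) _
    (φ.measurableSet_setOf_eval_of_vars_subset (Set.subset_univ _))

variable {μ : Measure (V → Bool)}

theorem measureReal_inter_setOf_eval_of_disjoint
    (hμ : iIndepFun (fun v (a : V → Bool) ↦ a v) μ)
    {φ ψ : LineageExpr V} (hd : Disjoint φ.vars ψ.vars) :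
    μ.real ({a | φ.eval a = true} ∩ {a | ψ.eval a = true})
      = μ.real {a | φ.eval a = true} * μ.real {a | ψ.eval a = true} := by
  have hind := indep_iSup_of_disjoint (fun v ↦ (measurable_pi_apply v).comap_le)
    ((iIndepFun_iff_iIndep _ _ _).1 hμ) hd
  rw [measureReal_def, (Indep_iff _ _ _).1 hind _ _
    (φ.measurableSet_setOf_eval_of_vars_subset le_rfl)
    (ψ.measurableSet_setOf_eval_of_vars_subset le_rfl), ENNReal.toReal_mul]
  rfl

theorem measureReal_setOf_eval_eq_Pe [IsProbabilityMeasure μ]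
    (hμ : iIndepFun (fun v (a : V → Bool) ↦ a v) μ) {φ : LineageExpr V} (hφ : φ.ReadOnce) :
    μ.real {a | φ.eval a = true} = Pe (fun v ↦ μ.real {a | a v = true}) φ := by
  induction hφ with
  | var v => rfl
  | @not φ _ ih =>
    rw [setOf_eval_not, probReal_compl_eq_one_sub φ.measurableSet_setOf_eval, ih, Pe]
  | @and φ ψ _ _ hd ih₁ ih₂ =>
    rw [setOf_eval_and, measureReal_inter_setOf_eval_of_disjoint hμ hd, ih₁, ih₂, Pe]
  | @or φ ψ _ _ hd ih₁ ih₂ =>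
    rw [setOf_eval_or, eq_sub_of_add_eq (measureReal_union_add_inter ψ.measurableSet_setOf_eval),
      measureReal_inter_setOf_eval_of_disjoint hμ hd, ih₁, ih₂, Pe]

end LineageExpr

section prodBernoulli

variable {V : Type} [Fintype V] {p : V → ENNReal} (hp : ∀ v, p v ≤ 1)

instance : IsProbabilityMeasure (prodBernoulli p hp) := by
  unfold prodBernoulli; infer_instance

theorem iIndepFun_prodBernoulli : iIndepFun (fun v (a : V → Bool) ↦ a v) (prodBernoulli p hp) :=
  iIndepFun_pi (X := fun _ ↦ id) fun _ ↦ aemeasurable_id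

theorem prodBernoulli_setOf_apply_eq_true (v : V) :
    prodBernoulli p hp {a | a v = true} = p v := by
  change prodBernoulli p hp (Function.eval v ⁻¹' {true}) = p v
  rw [prodBernoulli, (measurePreserving_eval _ v).measure_preimage
    (measurableSet_singleton _).nullMeasurableSet,
    PMF.toMeasure_apply_singleton _ _ (measurableSet_singleton _)]
  exact (PMF.bernoulli_apply _ _).trans
    (ENNReal.coe_toNNReal (ne_top_of_le_ne_top ENNReal.one_ne_top (hp v)))

end prodBernoulli

section Lineage

variable {ι F V : Type}

theorem exists_mem_lam_eq_of_lamAt_eq_some {r : Set (TPTuple F V)} {f : F} {t : ℕ}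
    {φ : LineageExpr V} (h : lamAt r f t = some φ) : ∃ u ∈ r, u.lam = φ := by
  unfold lamAt at h
  split_ifs at h with hex
  exact ⟨hex.choose, hex.choose_spec.1, Option.some_injective _ h⟩

theorem readOnce_of_gOp_eq_some {op : TPOp} {l₁ l₂ : Option (LineageExpr V)}
    {φ : LineageExpr V} {U₁ U₂ : Set V} (hd : Disjoint U₁ U₂)
    (h₁ : ∀ ψ ∈ l₁, ψ.ReadOnce ∧ ψ.vars ⊆ U₁) (h₂ : ∀ ψ ∈ l₂, ψ.ReadOnce ∧ ψ.vars ⊆ U₂)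
    (h : gOp op l₁ l₂ = some φ) : φ.ReadOnce ∧ φ.vars ⊆ U₁ ∪ U₂ := by
  cases op <;> cases l₁ <;> cases l₂ <;> simp only [gOp, reduceCtorEq, Option.some.injEq] at h <;>
    subst h <;> simp only [Option.mem_def, Option.some.injEq, forall_eq'] at h₁ h₂
  all_goals first
    | exact ⟨.and h₁.1 h₂.1 (hd.mono h₁.2 h₂.2), Set.union_subset_union h₁.2 h₂.2⟩
    | exact ⟨.and h₁.1 h₂.1.not (hd.mono h₁.2 h₂.2), Set.union_subset_union h₁.2 h₂.2⟩
    | exact ⟨.or h₁.1 h₂.1 (hd.mono h₁.2 h₂.2), Set.union_subset_union h₁.2 h₂.2⟩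
    | exact ⟨h₁.1, h₁.2.trans Set.subset_union_left⟩
    | exact ⟨h₂.1, h₂.2.trans Set.subset_union_right⟩

theorem readOnce_of_mem_opResult {op : TPOp} {r s : Set (TPTuple F V)} {U₁ U₂ : Set V}
    (hd : Disjoint U₁ U₂) (hr : ∀ u ∈ r, u.lam.ReadOnce ∧ u.lam.vars ⊆ U₁)
    (hs : ∀ u ∈ s, u.lam.ReadOnce ∧ u.lam.vars ⊆ U₂) :
    ∀ u ∈ opResult op r s, u.lam.ReadOnce ∧ u.lam.vars ⊆ U₁ ∪ U₂ := by
  rintro u ⟨hlt, l₁, l₂, -, hg, hconst, -, -⟩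
  obtain ⟨hl₁, hl₂⟩ := hconst u.ts le_rfl hlt
  refine readOnce_of_gOp_eq_some hd (fun ψ hψ ↦ ?_) (fun ψ hψ ↦ ?_) hg
  · obtain ⟨w, hw, rfl⟩ := exists_mem_lam_eq_of_lamAt_eq_some (hl₁.trans hψ)
    exact hr w hw
  · obtain ⟨w, hw, rfl⟩ := exists_mem_lam_eq_of_lamAt_eq_some (hl₂.trans hψ)
    exact hs w hw

def baseVars (R : ι → Set (TPTuple F V)) (l : List ι) : Set V :=
  {v | ∃ i ∈ l, ∃ u ∈ R i, u.lam = .var v}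

theorem baseVars_append (R : ι → Set (TPTuple F V)) (l₁ l₂ : List ι) :
    baseVars R (l₁ ++ l₂) = baseVars R l₁ ∪ baseVars R l₂ := by
  ext v
  simp only [baseVars, List.mem_append, Set.mem_ofPred_eq, Set.mem_union, or_and_right, exists_or]

theorem disjoint_baseVars {R : ι → Set (TPTuple F V)} (hatom : AtomicDistinctLineages R)
    {l₁ l₂ : List ι} (h : l₁.Disjoint l₂) : Disjoint (baseVars R l₁) (baseVars R l₂) := by
  rw [Set.disjoint_left]
  rintro v ⟨i, hi, u, hu, hv⟩ ⟨j, hj, u', hu', hv'⟩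
  exact hatom.2 i j u hu u' hu' (.inl fun hij ↦ h hi (hij ▸ hj)) (hv.trans hv'.symm)

theorem TPQuery.readOnce_of_mem_eval {R : ι → Set (TPTuple F V)}
    (hatom : AtomicDistinctLineages R) (q : TPQuery ι) (hq : q.NonRepeating) :
    ∀ u ∈ q.eval R, u.lam.ReadOnce ∧ u.lam.vars ⊆ baseVars R q.idxList := by
  induction q with
  | base i =>
    intro u hu
    obtain ⟨v, hv⟩ := hatom.1 i u hu
    rw [hv]
    exact ⟨.var v, Set.singleton_subset_iff.2 ⟨i, List.mem_singleton_self i, u, hu, hv⟩⟩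
  | inter q₁ q₂ ih₁ ih₂ | diff q₁ q₂ ih₁ ih₂ | union q₁ q₂ ih₁ ih₂ =>
    obtain ⟨h₁, h₂, hd⟩ := List.nodup_append'.1 hq
    rw [TPQuery.idxList, baseVars_append]
    exact readOnce_of_mem_opResult (disjoint_baseVars hatom hd) (ih₁ h₁) (ih₂ h₂)

end Lineage

open MeasureTheory in
theorem tp_nonrepeating_query_probability_eq_Pe_general {ι F V : Type} [Fintype V]
    (R : ι → Set (TPTuple F V))
    (hatom : AtomicDistinctLineages R)
    (q : TPQuery ι) (hnr : q.NonRepeating)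
    (p : V → ℝ) (hp0 : ∀ v, 0 ≤ p v) (hp1 : ∀ v, p v ≤ 1) :
    ∀ u ∈ q.eval R,
      (prodBernoulli (fun v => ENNReal.ofReal (p v))
          (fun v => ENNReal.ofReal_le_one.mpr (hp1 v))
          {a | u.lam.eval a = true}).toReal = Pe p u.lam := by
  intro u hu
  set μ := prodBernoulli (fun v => ENNReal.ofReal (p v)) fun v => ENNReal.ofReal_le_one.mpr (hp1 v)
  have hcoord : (fun v ↦ μ.real {a | a v = true}) = p := funext fun v ↦ by
    rw [measureReal_def, prodBernoulli_setOf_apply_eq_true, ENNReal.toReal_ofReal (hp0 v)]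
  rw [← measureReal_def, LineageExpr.measureReal_setOf_eval_eq_Pe (iIndepFun_prodBernoulli _)
    (q.readOnce_of_mem_eval hatom hnr u hu).1, hcoord]

open MeasureTheory in
/-- For a non-repeating TP set query `Q` over duplicate-free TP
relations with atomic, pairwise distinct base lineages, where the tuple
identifiers form the finite type `V` and assignments are distributed by the
product Bernoulli measure (identifier `v` true with probability `p v ∈ [0,1]`),
the marginal probability of every result tuple's lineage equals its recursive
valuation `Pe`. -/
theorem tp_nonrepeating_query_probability_eq_Pe {ι F V : Type} [Fintype V]
    (R : ι → Set (TPTuple F V))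
    (hfin : ∀ i, (R i).Finite) (hWF : ∀ i, WF (R i)) (hDF : ∀ i, DupFree (R i))
    (hatom : AtomicDistinctLineages R)
    (hall : ∀ v : V, ∃ i, ∃ u ∈ R i, u.lam = LineageExpr.var v)
    (q : TPQuery ι) (hnr : q.NonRepeating)
    (p : V → ℝ) (hp0 : ∀ v, 0 ≤ p v) (hp1 : ∀ v, p v ≤ 1) :
    ∀ u ∈ q.eval R,
      (prodBernoulli (fun v => ENNReal.ofReal (p v))
          (fun v => ENNReal.ofReal_le_one.mpr (hp1 v))
          {a | u.lam.eval a = true}).toReal = Pe p u.lam :=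
  tp_nonrepeating_query_probability_eq_Pe_general R hatom q hnr p hp0 hp1
end
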